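/- arXiv:2112.03115 — 6 statements merged into one kernel-verified Lean document; each statement's English description precedes it below -/
import Mathlib

section
/- Let N_t ≥ 1, K, M, C ∈ ℂ^{N_t×N_t}, a, Δx > 0, N_x, N ≥ 2 even, and ω ∈ ℝ. Assume the slab operator A is invertible on (ℂ^{N_t})^{N_x} and that Â(θ_x) := K + (a/Δx)(1−e^{−iθ_x})M ∈ ℂ^{N_t×N_t} is invertible, where θ_x = 2k_xπ/N_x and θ_t = 2k_tπ/N are admissible frequencies. Define the damped block Jacobi iteration operator S u := u − ω D^{−1} L u, where D is the block-diagonal operator (D u)^n = A u^n for n = 1,…,N. Then for any v ∈ ℂ^{N_t}, the space-time Fourier mode ψ with ψ^n_j = e^{i(jθ_x+nθ_t)} v satisfies, for all n = 1,…,N and j = 1,…,N_x, (S ψ)^n_j = 𝓢(θ_x,θ_t) ψ^n_j with Fourier symbol 𝓢(θ_x,θ_t) = (1−ω) I_{N_t} + ω e^{−iθ_t} Â(θ_x)^{−1} C. -/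
/-- Fourier symbol of the damped block Jacobi smoother `S = I - ω D⁻¹ L`:
for admissible frequencies, the space-time Fourier mode is an eigenfunction of `S`
with matrix symbol `𝓢(θx,θt) = (1-ω) I + ω e^{-iθt} Â(θx)⁻¹ C`. -/
theorem stmt_1
    (Nt : ℕ) (hNt : 1 ≤ Nt)
    (K M C : Matrix (Fin Nt) (Fin Nt) ℂ)
    (a Δx : ℝ) (ha : 0 < a) (hΔx : 0 < Δx)
    (Nx N : ℕ) [NeZero Nx] [NeZero N] (hNx : 2 ≤ Nx) (hN : 2 ≤ N)
    (hNxeven : Nx % 2 = 0) (hNeven : N % 2 = 0)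
    (ω : ℝ)
    (θx θt : ℝ)
    (hθx : ∃ kx : ℤ, (1 - (Nx : ℤ) / 2 ≤ kx ∧ kx ≤ (Nx : ℤ) / 2) ∧
      θx = 2 * (kx : ℝ) * Real.pi / (Nx : ℝ))
    (hθt : ∃ kt : ℤ, (1 - (N : ℤ) / 2 ≤ kt ∧ kt ≤ (N : ℤ) / 2) ∧
      θt = 2 * (kt : ℝ) * Real.pi / (N : ℝ))
    -- the slab operator A (with periodic spatial index)
    (Aop : (Fin Nx → Fin Nt → ℂ) → Fin Nx → Fin Nt → ℂ)
    (hAop : ∀ (w : Fin Nx → Fin Nt → ℂ) (j : Fin Nx),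
      Aop w j = K.mulVec (w j) + ((a / Δx : ℝ) : ℂ) • M.mulVec (w j - w (j - 1)))
    -- A is invertible on (ℂ^{Nt})^{Nx}
    (hAinv : Function.Bijective Aop)
    -- the symbol Â(θx) = K + (a/Δx)(1 - e^{-iθx}) M , assumed invertible
    (Ahat : Matrix (Fin Nt) (Fin Nt) ℂ)
    (hAhat : Ahat = K + (((a / Δx : ℝ) : ℂ) * (1 - Complex.exp (-Complex.I * (θx : ℂ)))) • M)
    (hAhatInv : IsUnit Ahat)
    -- the space-time operator L : (L u)^n = B u^{n-1} + A u^n, periodic indices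
    (Lop : (Fin N → Fin Nx → Fin Nt → ℂ) → Fin N → Fin Nx → Fin Nt → ℂ)
    (hLop : ∀ (u : Fin N → Fin Nx → Fin Nt → ℂ) (n : Fin N) (j : Fin Nx),
      Lop u n j = -(C.mulVec (u (n - 1) j)) + Aop (u n) j)
    -- the damped block Jacobi iteration operator S u = u - ω D⁻¹ L u, characterized by
    -- D (u - S u) = ω L u, where (D u)^n = A u^n
    (Sop : (Fin N → Fin Nx → Fin Nt → ℂ) → Fin N → Fin Nx → Fin Nt → ℂ)
    (hSop : ∀ (u : Fin N → Fin Nx → Fin Nt → ℂ) (n : Fin N),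
      Aop (u n - Sop u n) = (ω : ℂ) • Lop u n)
    (v : Fin Nt → ℂ)
    -- the space-time Fourier mode with frequencies (θx, θt) and coefficient v
    (ψ : Fin N → Fin Nx → Fin Nt → ℂ)
    (hψ : ∀ (n : Fin N) (j : Fin Nx), ψ n j =
      Complex.exp (Complex.I * ((((j : ℕ) + 1 : ℕ) : ℂ) * (θx : ℂ)
        + (((n : ℕ) + 1 : ℕ) : ℂ) * (θt : ℂ))) • v) :
    ∀ (n : Fin N) (j : Fin Nx),
      Sop ψ n j =
        ((1 - (ω : ℂ)) • (1 : Matrix (Fin Nt) (Fin Nt) ℂ)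
          + ((ω : ℂ) * Complex.exp (-Complex.I * (θt : ℂ))) • (Ahat⁻¹ * C)).mulVec
          (ψ n j) := by
  obtain ⟨kx, _, hθxval⟩ := hθx
  obtain ⟨kt, _, hθtval⟩ := hθt
  have hNx0 : (Nx : ℝ) ≠ 0 := Nat.cast_ne_zero.mpr (NeZero.ne Nx)
  have hN0 : (N : ℝ) ≠ 0 := Nat.cast_ne_zero.mpr (NeZero.ne N)
  -- periodicity of the exponentials
  have hexNx : Complex.exp (Complex.I * ((Nx : ℂ) * (θx : ℂ))) = 1 := by
    have : Complex.I * ((Nx : ℂ) * (θx : ℂ)) = (kx : ℂ) * (2 * (Real.pi : ℂ) * Complex.I) := by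
      have hNx0' : (Nx : ℂ) ≠ 0 := Nat.cast_ne_zero.mpr (NeZero.ne Nx)
      rw [hθxval]; push_cast; field_simp
    rw [this, Complex.exp_int_mul_two_pi_mul_I]
  have hexN : Complex.exp (Complex.I * ((N : ℂ) * (θt : ℂ))) = 1 := by
    have : Complex.I * ((N : ℂ) * (θt : ℂ)) = (kt : ℂ) * (2 * (Real.pi : ℂ) * Complex.I) := by
      have hN0' : (N : ℂ) ≠ 0 := Nat.cast_ne_zero.mpr (NeZero.ne N)
      rw [hθtval]; push_cast; field_simp
    rw [this, Complex.exp_int_mul_two_pi_mul_I]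
  -- spatial shift of the mode
  have hshiftx : ∀ (n : Fin N) (j : Fin Nx),
      ψ n (j - 1) = Complex.exp (-Complex.I * (θx : ℂ)) • ψ n j := by
    intro n j
    rw [hψ, hψ, smul_smul, ← Complex.exp_add]
    congr 1
    obtain ⟨m, rfl⟩ := Nat.exists_eq_succ_of_ne_zero (NeZero.ne Nx)
    rw [Fin.coe_sub_one]
    by_cases hj : j = 0
    · rw [if_pos hj, hj]
      have hm : (m : ℕ) + 1 = (m + 1 : ℕ) := rfl
      have key : Complex.I * ((((m : ℕ) + 1 : ℕ) : ℂ) * (θx : ℂ)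
            + ((((n : ℕ) + 1 : ℕ)) : ℂ) * (θt : ℂ))
          = Complex.I * (((m + 1 : ℕ) : ℂ) * (θx : ℂ))
            + (-Complex.I * (θx : ℂ)
              + Complex.I * (((((0 : Fin (m+1)) : ℕ) + 1 : ℕ) : ℂ) * (θx : ℂ)
                + ((((n : ℕ) + 1 : ℕ)) : ℂ) * (θt : ℂ))) := by
        push_cast [Fin.val_zero]; ring
      rw [key, Complex.exp_add]
      have h1 : Complex.exp (Complex.I * (((m + 1 : ℕ) : ℂ) * (θx : ℂ))) = 1 := hexNx
      rw [h1, one_mul]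
    · rw [if_neg hj]
      have hj' : (j : ℕ) ≠ 0 := fun h => hj (Fin.ext (by simp [h]))
      have : ((j : ℕ) - 1 + 1 : ℕ) = (j : ℕ) := Nat.succ_pred_eq_of_pos (Nat.pos_of_ne_zero hj')
      rw [this]
      have : ((j : ℕ) : ℂ) = (((j : ℕ) + 1 : ℕ) : ℂ) - 1 := by push_cast; ring
      rw [this]; push_cast; ring
  -- temporal shift of the mode
  have hshiftt : ∀ (n : Fin N) (j : Fin Nx),
      ψ (n - 1) j = Complex.exp (-Complex.I * (θt : ℂ)) • ψ n j := by
    intro n j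
    rw [hψ, hψ, smul_smul, ← Complex.exp_add]
    congr 1
    obtain ⟨m, rfl⟩ := Nat.exists_eq_succ_of_ne_zero (NeZero.ne N)
    rw [Fin.coe_sub_one]
    by_cases hn : n = 0
    · rw [if_pos hn, hn]
      have key : Complex.I * (((((j : ℕ) + 1 : ℕ)) : ℂ) * (θx : ℂ)
            + (((m : ℕ) + 1 : ℕ) : ℂ) * (θt : ℂ))
          = Complex.I * (((m + 1 : ℕ) : ℂ) * (θt : ℂ))
            + (-Complex.I * (θt : ℂ)
              + Complex.I * (((((j : ℕ)) + 1 : ℕ) : ℂ) * (θx : ℂ)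
                + ((((0 : Fin (m+1)) : ℕ) + 1 : ℕ) : ℂ) * (θt : ℂ))) := by
        push_cast [Fin.val_zero]; ring
      rw [key, Complex.exp_add]
      have h1 : Complex.exp (Complex.I * (((m + 1 : ℕ) : ℂ) * (θt : ℂ))) = 1 := hexN
      rw [h1, one_mul]
    · rw [if_neg hn]
      have hn' : (n : ℕ) ≠ 0 := fun h => hn (Fin.ext (by simp [h]))
      have : ((n : ℕ) - 1 + 1 : ℕ) = (n : ℕ) := Nat.succ_pred_eq_of_pos (Nat.pos_of_ne_zero hn')
      rw [this]
      have : ((n : ℕ) : ℂ) = (((n : ℕ) + 1 : ℕ) : ℂ) - 1 := by push_cast; ring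
      rw [this]; push_cast; ring
  set ex := Complex.exp (-Complex.I * (θx : ℂ)) with hex
  set et := Complex.exp (-Complex.I * (θt : ℂ)) with het
  -- action of Aop on matrix-modulated modes
  have hAmode : ∀ (n : Fin N) (Q : Matrix (Fin Nt) (Fin Nt) ℂ) (j : Fin Nx),
      Aop (fun j => Q.mulVec (ψ n j)) j = (Ahat * Q).mulVec (ψ n j) := by
    intro n Q j
    rw [hAop]
    beta_reduce
    rw [hshiftx n j, Matrix.mulVec_smul]
    have hsub : Q.mulVec (ψ n j) - ex • Q.mulVec (ψ n j)
        = ((1 : ℂ) - ex) • Q.mulVec (ψ n j) := by rw [sub_smul, one_smul]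
    rw [hsub, Matrix.mulVec_smul, hAhat, Matrix.add_mul, Matrix.add_mulVec,
      Matrix.smul_mul, Matrix.smul_mulVec, ← Matrix.mulVec_mulVec,
      ← Matrix.mulVec_mulVec, smul_smul]
  have hA1 : ∀ (n : Fin N) (j : Fin Nx), Aop (ψ n) j = Ahat.mulVec (ψ n j) := by
    intro n j
    have h1 : ψ n = fun j => (1 : Matrix (Fin Nt) (Fin Nt) ℂ).mulVec (ψ n j) := by
      funext j; rw [Matrix.one_mulVec]
    conv_lhs => rw [h1]
    rw [hAmode n 1 j, Matrix.mul_one]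
  -- matrix inverse identity
  have hDet : Ahat * Ahat⁻¹ = 1 :=
    Matrix.mul_nonsing_inv _ ((Matrix.isUnit_iff_isUnit_det Ahat).mp hAhatInv)
  intro n j
  set Ssym := (1 - (ω : ℂ)) • (1 : Matrix (Fin Nt) (Fin Nt) ℂ)
      + ((ω : ℂ) * et) • (Ahat⁻¹ * C) with hSsym
  have hmat : Ahat * ((1 : Matrix (Fin Nt) (Fin Nt) ℂ) - Ssym)
      = (ω : ℂ) • Ahat - ((ω : ℂ) * et) • C := by
    have h1 : (1 : Matrix (Fin Nt) (Fin Nt) ℂ) - Ssym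
        = (ω : ℂ) • (1 : Matrix (Fin Nt) (Fin Nt) ℂ) - ((ω : ℂ) * et) • (Ahat⁻¹ * C) := by
      rw [hSsym]; module
    rw [h1, Matrix.mul_sub, Matrix.mul_smul, Matrix.mul_smul, ← Matrix.mul_assoc, hDet,
      Matrix.one_mul, Matrix.mul_one]
  have hcomp : Aop (ψ n - fun j => Ssym.mulVec (ψ n j)) = (ω : ℂ) • Lop ψ n := by
    have hfun : ψ n - (fun j => Ssym.mulVec (ψ n j))
        = fun j => ((1 : Matrix (Fin Nt) (Fin Nt) ℂ) - Ssym).mulVec (ψ n j) := by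
      funext j
      show ψ n j - Ssym.mulVec (ψ n j) = _
      rw [Matrix.sub_mulVec, Matrix.one_mulVec]
    rw [hfun]
    funext j
    rw [hAmode n _ j, hmat, Pi.smul_apply, hLop, hA1, hshiftt, Matrix.mulVec_smul,
      Matrix.sub_mulVec, Matrix.smul_mulVec, Matrix.smul_mulVec]
    module
  have h2 : ψ n - Sop ψ n = ψ n - fun j => Ssym.mulVec (ψ n j) :=
    hAinv.injective (by rw [hSop ψ n, hcomp])
  have h3 : Sop ψ n = fun j => Ssym.mulVec (ψ n j) := sub_right_injective h2
  exact congrFun h3 j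
end

section
/- Let N ≥ 2 be even and let R : ℂ^{N} → ℂ^{N/2} be the agglomeration restriction (R w)_j = (w_{2j−1} + w_{2j})/2, j = 1,…,N/2. Then for every frequency θ = 2kπ/N (k = 1−N/2,…,N/2), the Fourier mode φ(θ) ∈ ℂ^{N} with components φ_j(θ) = e^{ijθ} satisfies (R φ(θ))_j = 𝓡(θ) e^{ij(2θ)} for all j = 1,…,N/2, with scalar Fourier symbol 𝓡(θ) = (e^{−iθ} + 1)/2. -/
/-- Fourier symbol of the agglomeration restriction in space:
`(R φ(θ))_j = 𝓡(θ) e^{ij(2θ)}` with `𝓡(θ) = (e^{-iθ} + 1)/2`. -/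
theorem stmt_2
    (N : ℕ) (hN : 2 ≤ N) (hNeven : N % 2 = 0)
    -- the agglomeration restriction (R w)_j = (w_{2j-1} + w_{2j})/2
    (Rop : (Fin N → ℂ) → Fin (N / 2) → ℂ)
    (hRop : ∀ (w : Fin N → ℂ) (j : Fin (N / 2)),
      Rop w j = (w ⟨2 * (j : ℕ), by have := j.isLt; omega⟩
        + w ⟨2 * (j : ℕ) + 1, by have := j.isLt; omega⟩) / 2)
    (θ : ℝ)
    (hθ : ∃ k : ℤ, (1 - (N : ℤ) / 2 ≤ k ∧ k ≤ (N : ℤ) / 2) ∧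
      θ = 2 * (k : ℝ) * Real.pi / (N : ℝ))
    -- the Fourier mode φ(θ) with components φ_j(θ) = e^{ijθ}
    (φ : Fin N → ℂ)
    (hφ : ∀ j : Fin N, φ j = Complex.exp (Complex.I * ((((j : ℕ) + 1 : ℕ) : ℂ) * (θ : ℂ))))
    (j : Fin (N / 2)) :
    Rop φ j = (Complex.exp (-Complex.I * (θ : ℂ)) + 1) / 2
      * Complex.exp (Complex.I * ((((j : ℕ) + 1 : ℕ) : ℂ) * (2 * (θ : ℂ)))) := by
  rw [hRop, hφ, hφ]
  push_cast
  have h1 : Complex.exp (Complex.I * ((2 * ((j:ℕ):ℂ) + 1) * (θ:ℂ)))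
      = Complex.exp (-Complex.I * (θ:ℂ))
        * Complex.exp (Complex.I * ((((j:ℕ):ℂ) + 1) * (2 * (θ:ℂ)))) := by
    rw [← Complex.exp_add]; ring_nf
  have h2 : Complex.exp (Complex.I * ((2 * ((j:ℕ):ℂ) + 1 + 1) * (θ:ℂ)))
      = Complex.exp (Complex.I * ((((j:ℕ):ℂ) + 1) * (2 * (θ:ℂ)))) := by
    ring_nf
  rw [h1, h2]; ring
end

section
/- Let n ≥ 2, let A ∈ ℂ^{n×n} be invertible, let C ∈ ℂ^{n×n} have its only nonzero entry C_{1,n} = 1, and set r := (A^{−1})_{n,1}. For ω ∈ ℝ and θ ∈ ℝ, define the smoother symbol S := (1−ω) I_n + ω e^{−iθ} A^{−1} C. Then the spectrum of S equals {1−ω, 1−ω + ω e^{−iθ} r}, and consequently the spectral radius of S equals max{ |1−ω|, |1−ω + ω e^{−iθ} r| }. -/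
/-!
The coupling `A⁻¹ C = A⁻¹ e₁ eₙᵀ` has rank one, so its characteristic polynomial is
`X ^ (n - 1) * (X - eₙᵀ A⁻¹ e₁)`, and its spectrum is `{0, r}`. The smoother symbol is a
scalar shift of a multiple of this rank-one matrix, which shifts and scales the spectrum.
-/

open Matrix Polynomial

namespace Matrix

variable {K ι : Type*} [Field K] [Fintype ι] [DecidableEq ι] [Nontrivial ι]

theorem spectrum_vecMulVec (u v : ι → K) :
    spectrum K (vecMulVec u v) = {0, u ⬝ᵥ v} := by
  have hcard : Fintype.card ι - 1 ≠ 0 := by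
    have := Fintype.one_lt_card (α := ι); omega
  have hfactor : (vecMulVec u v).charpoly =
      X ^ (Fintype.card ι - 1) * (X - Polynomial.C (u ⬝ᵥ v)) := by
    rw [charpoly_vecMulVec, smul_eq_C_mul, mul_sub, ← pow_succ,
      Nat.sub_add_cancel Fintype.card_pos]
    ring
  ext z
  simp [mem_spectrum_iff_isRoot_charpoly, hfactor, hcard, sub_eq_zero]

theorem spectrum_smul_one_add_vecMulVec (a : K) (u v : ι → K) :
    spectrum K (a • (1 : Matrix ι ι K) + vecMulVec u v) = {a, a + u ⬝ᵥ v} := by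
  rw [← Algebra.algebraMap_eq_smul_one, ← spectrum.singleton_add_eq, spectrum_vecMulVec,
    Set.singleton_add, Set.image_pair, add_zero]

end Matrix

/-- Spectrum and spectral radius of the smoother symbol
`S = (1-ω) I + ω e^{-iθ} A⁻¹ C` with `C = e₁ eₙᵀ` and `r = (A⁻¹)_{n,1}`:
`σ(S) = {1-ω, 1-ω+ωe^{-iθ}r}` and `ρ(S) = max{|1-ω|, |1-ω+ωe^{-iθ}r|}`. -/
theorem stmt_9
    (n : ℕ) (hn : 2 ≤ n)
    (A : Matrix (Fin n) (Fin n) ℂ)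
    (C : Matrix (Fin n) (Fin n) ℂ)
    (hC : C = Matrix.single (⟨0, by omega⟩ : Fin n) (⟨n - 1, by omega⟩ : Fin n) 1)
    (r : ℂ) (hr : r = A⁻¹ ⟨n - 1, by omega⟩ ⟨0, by omega⟩)
    (ω θ : ℝ)
    (S : Matrix (Fin n) (Fin n) ℂ)
    (hS : S = (1 - (ω : ℂ)) • (1 : Matrix (Fin n) (Fin n) ℂ)
      + ((ω : ℂ) * Complex.exp (-Complex.I * (θ : ℂ))) • (A⁻¹ * C)) :
    spectrum ℂ S = {1 - (ω : ℂ), 1 - (ω : ℂ) + (ω : ℂ) * Complex.exp (-Complex.I * (θ : ℂ)) * r}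
    ∧ spectralRadius ℂ S =
        max (‖(1 - (ω : ℂ))‖₊ : ENNReal)
          (‖(1 - (ω : ℂ) + (ω : ℂ) * Complex.exp (-Complex.I * (θ : ℂ)) * r)‖₊ : ENNReal) := by
  have : Nontrivial (Fin n) := Fin.nontrivial_iff_two_le.mpr hn
  set first : Fin n := ⟨0, by omega⟩
  set last : Fin n := ⟨n - 1, by omega⟩
  set c : ℂ := (ω : ℂ) * Complex.exp (-Complex.I * (θ : ℂ))
  have hrank_one :
      c • (A⁻¹ * C) = vecMulVec (c • (A⁻¹ *ᵥ Pi.single first 1)) (Pi.single last 1) := by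
    rw [hC, single_eq_single_vecMulVec_single, mul_vecMulVec, smul_vecMulVec]
  have hcorner : (c • (A⁻¹ *ᵥ Pi.single first 1)) ⬝ᵥ Pi.single last 1 = c * r := by
    simp [hr, dotProduct_single]
  have hspec : spectrum ℂ S = {1 - (ω : ℂ), 1 - (ω : ℂ) + c * r} := by
    rw [hS, hrank_one, spectrum_smul_one_add_vecMulVec, hcorner]
  exact ⟨hspec, by rw [spectralRadius, hspec, iSup_pair]⟩
end

section
/- (Restriction symbol for semi-coarsening in time.) Let N_t ≥ 1, R_1, R_2 ∈ ℂ^{N_t×N_t}, N_x ≥ 2 even and N ≥ 4 even. Define R^s on space-time grid functions by (R^s u)^n_j = R_1 u^{2n−1}_j + R_2 u^{2n}_j for n = 1,…,N/2, j = 1,…,N_x. Let θ_x ∈ (−π/2,π/2] and θ_t ∈ (−π/2,π/2] be low admissible frequencies and let ψ be the harmonic with blocks v_1, v_2, v_3, v_4 ∈ ℂ^{N_t}: ψ^n_j = e^{i(jθ_x+nθ_t)} v_1 + e^{i(jγ(θ_x)+nθ_t)} v_2 + e^{i(jθ_x+nγ(θ_t))} v_3 + e^{i(jγ(θ_x)+nγ(θ_t))}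 v_4. Then for all n = 1,…,N/2 and j = 1,…,N_x: (R^s ψ)^n_j = e^{i(jθ_x+n·2θ_t)} (𝓡(θ_t) v_1 + 𝓡(γ(θ_t)) v_3) + e^{i(jγ(θ_x)+n·2θ_t)} (𝓡(θ_t) v_2 + 𝓡(γ(θ_t)) v_4), where 𝓡(θ) = e^{−iθ} R_1 + R_2. -/
/-- Mapping property of the restriction for semi-coarsening in time on the space of
low-frequency harmonics: `R^s` maps the harmonic with blocks `(v₁,v₂,v₃,v₄)` to the
coarse function with blocks `𝓡(θt)v₁ + 𝓡(γθt)v₃` and `𝓡(θt)v₂ + 𝓡(γθt)v₄`,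
where `𝓡(θ) = e^{-iθ}R₁ + R₂`. -/
theorem stmt_10
    (Nt : ℕ) (hNt : 1 ≤ Nt)
    (R₁ R₂ : Matrix (Fin Nt) (Fin Nt) ℂ)
    (Nx N : ℕ) (hNx : 2 ≤ Nx) (hN : 4 ≤ N)
    (hNxeven : Nx % 2 = 0) (hNeven : N % 2 = 0)
    -- the semi-coarsening restriction (restriction in time only)
    (Rs : (Fin N → Fin Nx → Fin Nt → ℂ) → Fin (N / 2) → Fin Nx → Fin Nt → ℂ)
    (hRs : ∀ (u : Fin N → Fin Nx → Fin Nt → ℂ) (n : Fin (N / 2)) (j : Fin Nx),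
      Rs u n j = R₁.mulVec (u ⟨2 * (n : ℕ), by have := n.isLt; omega⟩ j)
        + R₂.mulVec (u ⟨2 * (n : ℕ) + 1, by have := n.isLt; omega⟩ j))
    (θx θt : ℝ)
    (hθxadm : ∃ kx : ℤ, (1 - (Nx : ℤ) / 2 ≤ kx ∧ kx ≤ (Nx : ℤ) / 2) ∧
      θx = 2 * (kx : ℝ) * Real.pi / (Nx : ℝ))
    (hθtadm : ∃ kt : ℤ, (1 - (N : ℤ) / 2 ≤ kt ∧ kt ≤ (N : ℤ) / 2) ∧
      θt = 2 * (kt : ℝ) * Real.pi / (N : ℝ))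
    (hθxlow : -(Real.pi / 2) < θx ∧ θx ≤ Real.pi / 2)
    (hθtlow : -(Real.pi / 2) < θt ∧ θt ≤ Real.pi / 2)
    -- the shifting operator γ
    (γ : ℝ → ℝ) (hγ : ∀ s : ℝ, γ s = if s < 0 then s + Real.pi else s - Real.pi)
    (v₁ v₂ v₃ v₄ : Fin Nt → ℂ)
    -- the harmonic with blocks v₁, v₂, v₃, v₄
    (ψ : Fin N → Fin Nx → Fin Nt → ℂ)
    (hψ : ∀ (n : Fin N) (j : Fin Nx), ψ n j =
      Complex.exp (Complex.I * ((((j : ℕ) + 1 : ℕ) : ℂ) * (θx : ℂ)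
        + (((n : ℕ) + 1 : ℕ) : ℂ) * (θt : ℂ))) • v₁
      + Complex.exp (Complex.I * ((((j : ℕ) + 1 : ℕ) : ℂ) * ((γ θx : ℝ) : ℂ)
        + (((n : ℕ) + 1 : ℕ) : ℂ) * (θt : ℂ))) • v₂
      + Complex.exp (Complex.I * ((((j : ℕ) + 1 : ℕ) : ℂ) * (θx : ℂ)
        + (((n : ℕ) + 1 : ℕ) : ℂ) * ((γ θt : ℝ) : ℂ))) • v₃
      + Complex.exp (Complex.I * ((((j : ℕ) + 1 : ℕ) : ℂ) * ((γ θx : ℝ) : ℂ)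
        + (((n : ℕ) + 1 : ℕ) : ℂ) * ((γ θt : ℝ) : ℂ))) • v₄) :
    ∀ (n : Fin (N / 2)) (j : Fin Nx),
      Rs ψ n j =
        Complex.exp (Complex.I * ((((j : ℕ) + 1 : ℕ) : ℂ) * (θx : ℂ)
            + (((n : ℕ) + 1 : ℕ) : ℂ) * (2 * (θt : ℂ)))) •
          ((Complex.exp (-Complex.I * (θt : ℂ)) • R₁ + R₂).mulVec v₁
            + (Complex.exp (-Complex.I * ((γ θt : ℝ) : ℂ)) • R₁ + R₂).mulVec v₃)
        + Complex.exp (Complex.I * ((((j : ℕ) + 1 : ℕ) : ℂ) * ((γ θx : ℝ) : ℂ)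
            + (((n : ℕ) + 1 : ℕ) : ℂ) * (2 * (θt : ℂ)))) •
          ((Complex.exp (-Complex.I * (θt : ℂ)) • R₁ + R₂).mulVec v₂
            + (Complex.exp (-Complex.I * ((γ θt : ℝ) : ℂ)) • R₁ + R₂).mulVec v₄) := by
  intro n j
  have h2pi : Complex.exp ((((n : ℕ) : ℂ) + 1) * (2 * Real.pi * Complex.I)) = 1 := by
    have h := Complex.exp_nat_mul_two_pi_mul_I ((n : ℕ) + 1)
    push_cast at h
    exact h
  have hE : Complex.exp (Complex.I * ((2 * ((n : ℕ) : ℂ) + 2) * ((γ θt : ℝ) : ℂ)))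
      = Complex.exp (Complex.I * ((2 * ((n : ℕ) : ℂ) + 2) * (θt : ℂ))) := by
    rw [hγ θt]
    split_ifs with h
    · push_cast
      rw [show Complex.I * ((2 * ((n : ℕ) : ℂ) + 2) * ((θt : ℂ) + (Real.pi : ℂ)))
          = Complex.I * ((2 * ((n : ℕ) : ℂ) + 2) * (θt : ℂ))
            + (((n : ℕ) : ℂ) + 1) * (2 * (Real.pi : ℂ) * Complex.I) by ring,
        Complex.exp_add, h2pi, mul_one]
    · push_cast
      rw [show Complex.I * ((2 * ((n : ℕ) : ℂ) + 2) * ((θt : ℂ) - (Real.pi : ℂ)))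
          = Complex.I * ((2 * ((n : ℕ) : ℂ) + 2) * (θt : ℂ))
            + -((((n : ℕ) : ℂ) + 1) * (2 * (Real.pi : ℂ) * Complex.I)) by ring,
        Complex.exp_add, Complex.exp_neg, h2pi, inv_one, mul_one]
  have hA : ∀ X : ℂ, Complex.exp (Complex.I * (X + (2 * ((n : ℕ) : ℂ) + 1) * (θt : ℂ)))
      = Complex.exp (Complex.I * (X + (((n : ℕ) : ℂ) + 1) * (2 * (θt : ℂ))))
        * Complex.exp (-Complex.I * (θt : ℂ)) := by
    intro X
    rw [← Complex.exp_add]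
    congr 1
    ring
  have hB : ∀ X : ℂ, Complex.exp (Complex.I * (X + (2 * ((n : ℕ) : ℂ) + 1 + 1) * (θt : ℂ)))
      = Complex.exp (Complex.I * (X + (((n : ℕ) : ℂ) + 1) * (2 * (θt : ℂ)))) := by
    intro X
    congr 1
    ring
  have hC : ∀ X : ℂ, Complex.exp (Complex.I * (X + (2 * ((n : ℕ) : ℂ) + 1) * ((γ θt : ℝ) : ℂ)))
      = Complex.exp (Complex.I * (X + (((n : ℕ) : ℂ) + 1) * (2 * (θt : ℂ))))
        * Complex.exp (-Complex.I * ((γ θt : ℝ) : ℂ)) := by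
    intro X
    calc Complex.exp (Complex.I * (X + (2 * ((n : ℕ) : ℂ) + 1) * ((γ θt : ℝ) : ℂ)))
        = Complex.exp (Complex.I * X + -(Complex.I * ((γ θt : ℝ) : ℂ)))
          * Complex.exp (Complex.I * ((2 * ((n : ℕ) : ℂ) + 2) * ((γ θt : ℝ) : ℂ))) := by
          rw [← Complex.exp_add]; congr 1; ring
      _ = Complex.exp (Complex.I * X + -(Complex.I * ((γ θt : ℝ) : ℂ)))
          * Complex.exp (Complex.I * ((2 * ((n : ℕ) : ℂ) + 2) * (θt : ℂ))) := by rw [hE]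
      _ = Complex.exp (Complex.I * (X + (((n : ℕ) : ℂ) + 1) * (2 * (θt : ℂ))))
          * Complex.exp (-Complex.I * ((γ θt : ℝ) : ℂ)) := by
          rw [← Complex.exp_add, ← Complex.exp_add]; congr 1; ring
  have hD : ∀ X : ℂ, Complex.exp (Complex.I * (X + (2 * ((n : ℕ) : ℂ) + 1 + 1) * ((γ θt : ℝ) : ℂ)))
      = Complex.exp (Complex.I * (X + (((n : ℕ) : ℂ) + 1) * (2 * (θt : ℂ)))) := by
    intro X
    calc Complex.exp (Complex.I * (X + (2 * ((n : ℕ) : ℂ) + 1 + 1) * ((γ θt : ℝ) : ℂ)))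
        = Complex.exp (Complex.I * X)
          * Complex.exp (Complex.I * ((2 * ((n : ℕ) : ℂ) + 2) * ((γ θt : ℝ) : ℂ))) := by
          rw [← Complex.exp_add]; congr 1; ring
      _ = Complex.exp (Complex.I * X)
          * Complex.exp (Complex.I * ((2 * ((n : ℕ) : ℂ) + 2) * (θt : ℂ))) := by rw [hE]
      _ = Complex.exp (Complex.I * (X + (((n : ℕ) : ℂ) + 1) * (2 * (θt : ℂ)))) := by
          rw [← Complex.exp_add]; congr 1; ring
  rw [hRs, hψ, hψ]
  simp only [Matrix.mulVec_add, Matrix.mulVec_smul, Matrix.add_mulVec,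
    Matrix.smul_mulVec, smul_add]
  match_scalars <;> push_cast <;> simp only [mul_one]
  · exact hA _
  · exact hA _
  · exact hC _
  · exact hC _
  · exact hB _
  · exact hB _
  · exact hD _
  · exact hD _
end

section
/- (Prolongation symbol for semi-coarsening in time.) Let N_t ≥ 1, R_1, R_2 ∈ ℂ^{N_t×N_t}, N_x ≥ 2 even and N ≥ 4 even. Define P^s on coarse space-time grid functions (with N/2 slabs) by (P^s u)^{2n−1}_j = R_1^T u^n_j and (P^s u)^{2n}_j = R_2^T u^n_j for n = 1,…,N/2, j = 1,…,N_x. Let θ_x ∈ (−π/2,π/2] and θ_t ∈ (−π/2,π/2] be low admissible frequencies and let ψ^c be the coarse harmonic ψ^{c,n}_j = e^{i(jθ_x+n·2θ_t)} w_1 + e^{i(jγ(θ_x)+n·2θ_t)} w_2 with w_1, w_2 ∈ ℂ^{N_t}. Then for all m = 1,…,N and j = 1,…,N_x: (P^s ψ^c)^m_j = e^{i(jθ_x+mθ_t)} 𝓟(θ_t) w_1 + e^{i(jγ(θ_x)+mθ_t)} 𝓟(θ_t) w_2 + e^{i(jθ_x+mγ(θ_t))} 𝓟(γ(θ_t)) w_1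 + e^{i(jγ(θ_x)+mγ(θ_t))} 𝓟(γ(θ_t)) w_2, where 𝓟(θ) = (e^{iθ} R_1^T + R_2^T)/2. -/
/-- Mapping property of the prolongation for semi-coarsening in time on the coarse
harmonics: `P^s` maps the coarse harmonic with blocks `(w₁,w₂)` to the fine harmonic
with blocks `𝓟(θt)w₁, 𝓟(θt)w₂, 𝓟(γθt)w₁, 𝓟(γθt)w₂`, where
`𝓟(θ) = (e^{iθ}R₁ᵀ + R₂ᵀ)/2`. -/
theorem stmt_11
    (Nt : ℕ) (hNt : 1 ≤ Nt)
    (R₁ R₂ : Matrix (Fin Nt) (Fin Nt) ℂ)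
    (Nx N : ℕ) (hNx : 2 ≤ Nx) (hN : 4 ≤ N)
    (hNxeven : Nx % 2 = 0) (hNeven : N % 2 = 0)
    -- the semi-coarsening prolongation (prolongation in time only)
    (Ps : (Fin (N / 2) → Fin Nx → Fin Nt → ℂ) → Fin N → Fin Nx → Fin Nt → ℂ)
    (hPs : ∀ (u : Fin (N / 2) → Fin Nx → Fin Nt → ℂ) (m : Fin N) (j : Fin Nx),
      Ps u m j = (if (m : ℕ) % 2 = 0 then R₁.transpose else R₂.transpose).mulVec
        (u ⟨(m : ℕ) / 2, by have := m.isLt; omega⟩ j))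
    (θx θt : ℝ)
    (hθxadm : ∃ kx : ℤ, (1 - (Nx : ℤ) / 2 ≤ kx ∧ kx ≤ (Nx : ℤ) / 2) ∧
      θx = 2 * (kx : ℝ) * Real.pi / (Nx : ℝ))
    (hθtadm : ∃ kt : ℤ, (1 - (N : ℤ) / 2 ≤ kt ∧ kt ≤ (N : ℤ) / 2) ∧
      θt = 2 * (kt : ℝ) * Real.pi / (N : ℝ))
    (hθxlow : -(Real.pi / 2) < θx ∧ θx ≤ Real.pi / 2)
    (hθtlow : -(Real.pi / 2) < θt ∧ θt ≤ Real.pi / 2)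
    -- the shifting operator γ
    (γ : ℝ → ℝ) (hγ : ∀ s : ℝ, γ s = if s < 0 then s + Real.pi else s - Real.pi)
    (w₁ w₂ : Fin Nt → ℂ)
    -- the coarse harmonic with blocks w₁, w₂
    (ψc : Fin (N / 2) → Fin Nx → Fin Nt → ℂ)
    (hψc : ∀ (n : Fin (N / 2)) (j : Fin Nx), ψc n j =
      Complex.exp (Complex.I * ((((j : ℕ) + 1 : ℕ) : ℂ) * (θx : ℂ)
        + (((n : ℕ) + 1 : ℕ) : ℂ) * (2 * (θt : ℂ)))) • w₁
      + Complex.exp (Complex.I * ((((j : ℕ) + 1 : ℕ) : ℂ) * ((γ θx : ℝ) : ℂ)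
        + (((n : ℕ) + 1 : ℕ) : ℂ) * (2 * (θt : ℂ)))) • w₂) :
    ∀ (m : Fin N) (j : Fin Nx),
      Ps ψc m j =
        Complex.exp (Complex.I * ((((j : ℕ) + 1 : ℕ) : ℂ) * (θx : ℂ)
            + (((m : ℕ) + 1 : ℕ) : ℂ) * (θt : ℂ))) •
          ((((1 : ℂ) / 2) • (Complex.exp (Complex.I * (θt : ℂ)) • R₁.transpose
            + R₂.transpose)).mulVec w₁)
        + Complex.exp (Complex.I * ((((j : ℕ) + 1 : ℕ) : ℂ) * ((γ θx : ℝ) : ℂ)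
            + (((m : ℕ) + 1 : ℕ) : ℂ) * (θt : ℂ))) •
          ((((1 : ℂ) / 2) • (Complex.exp (Complex.I * (θt : ℂ)) • R₁.transpose
            + R₂.transpose)).mulVec w₂)
        + Complex.exp (Complex.I * ((((j : ℕ) + 1 : ℕ) : ℂ) * (θx : ℂ)
            + (((m : ℕ) + 1 : ℕ) : ℂ) * ((γ θt : ℝ) : ℂ))) •
          ((((1 : ℂ) / 2) • (Complex.exp (Complex.I * ((γ θt : ℝ) : ℂ)) • R₁.transpose
            + R₂.transpose)).mulVec w₁)
        + Complex.exp (Complex.I * ((((j : ℕ) + 1 : ℕ) : ℂ) * ((γ θx : ℝ) : ℂ)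
            + (((m : ℕ) + 1 : ℕ) : ℂ) * ((γ θt : ℝ) : ℂ))) •
          ((((1 : ℂ) / 2) • (Complex.exp (Complex.I * ((γ θt : ℝ) : ℂ)) • R₁.transpose
            + R₂.transpose)).mulVec w₂) := by
  intro m j
  rw [hPs, hψc]
  have hpi : Complex.exp ((Real.pi : ℂ) * Complex.I) = -1 := Complex.exp_pi_mul_I
  have hγcases : γ θt = θt + Real.pi ∨ γ θt = θt - Real.pi := by
    rw [hγ]; split_ifs <;> [left; right] <;> rfl
  have ht' : Complex.exp (Complex.I * ((γ θt : ℝ) : ℂ))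
      = -Complex.exp (Complex.I * (θt : ℂ)) := by
    rcases hγcases with h | h <;> rw [h] <;> push_cast
    · rw [show Complex.I * ((θt : ℂ) + (Real.pi : ℂ))
        = Complex.I * (θt : ℂ) + (Real.pi : ℂ) * Complex.I by ring,
        Complex.exp_add, hpi]; ring
    · rw [show Complex.I * ((θt : ℂ) - (Real.pi : ℂ))
        = Complex.I * (θt : ℂ) + -((Real.pi : ℂ) * Complex.I) by ring,
        Complex.exp_add, Complex.exp_neg, hpi]
      norm_num
  have hs' : Complex.exp (Complex.I * ((((m : ℕ) + 1 : ℕ) : ℂ) * ((γ θt : ℝ) : ℂ)))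
      = (-1 : ℂ) ^ ((m : ℕ) + 1)
        * Complex.exp (Complex.I * ((((m : ℕ) + 1 : ℕ) : ℂ) * (θt : ℂ))) := by
    rcases hγcases with h | h <;> rw [h]
    · rw [show Complex.I * ((((m : ℕ) + 1 : ℕ) : ℂ) * (((θt + Real.pi : ℝ)) : ℂ))
        = Complex.I * ((((m : ℕ) + 1 : ℕ) : ℂ) * (θt : ℂ))
          + ((((m : ℕ) + 1 : ℕ)) : ℂ) * ((Real.pi : ℂ) * Complex.I) by push_cast; ring,
        Complex.exp_add, Complex.exp_nat_mul, hpi]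
      ring
    · rw [show Complex.I * ((((m : ℕ) + 1 : ℕ) : ℂ) * (((θt - Real.pi : ℝ)) : ℂ))
        = Complex.I * ((((m : ℕ) + 1 : ℕ) : ℂ) * (θt : ℂ))
          + -(((((m : ℕ) + 1 : ℕ)) : ℂ) * ((Real.pi : ℂ) * Complex.I)) by push_cast; ring,
        Complex.exp_add, Complex.exp_neg, Complex.exp_nat_mul, hpi]
      rw [← inv_pow, inv_neg, inv_one]; ring
  simp only [mul_add, Complex.exp_add]
  rw [ht', hs']
  by_cases hm : (m : ℕ) % 2 = 0
  · rw [if_pos hm]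
    have hsign : ((-1 : ℂ) ^ ((m : ℕ) + 1)) = -1 := Odd.neg_one_pow ⟨(m : ℕ) / 2, by omega⟩
    have hcoef : Complex.exp (Complex.I * (((((m : ℕ) / 2 : ℕ) + 1 : ℕ) : ℂ) * (2 * (θt : ℂ))))
        = Complex.exp (Complex.I * ((((m : ℕ) + 1 : ℕ) : ℂ) * (θt : ℂ)))
          * Complex.exp (Complex.I * (θt : ℂ)) := by
      have h2 : (((m : ℕ) / 2 + 1) : ℕ) * 2 = (m : ℕ) + 2 := by omega
      rw [show Complex.I * (((((m : ℕ) / 2 : ℕ) + 1 : ℕ) : ℂ) * (2 * (θt : ℂ)))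
          = Complex.I * (((((m : ℕ) / 2 + 1) * 2 : ℕ) : ℂ) * (θt : ℂ)) by push_cast; ring, h2,
        show Complex.I * ((((m : ℕ) + 2 : ℕ) : ℂ) * (θt : ℂ))
          = Complex.I * ((((m : ℕ) + 1 : ℕ) : ℂ) * (θt : ℂ)) + Complex.I * (θt : ℂ) by
          push_cast; ring,
        Complex.exp_add]
    rw [hcoef, hsign]
    simp only [Matrix.mulVec_add, Matrix.mulVec_smul, Matrix.smul_mulVec,
      Matrix.add_mulVec, smul_add, smul_smul]
    module
  · rw [if_neg hm]
    have hsign : ((-1 : ℂ) ^ ((m : ℕ) + 1)) = 1 := Even.neg_one_pow ⟨((m : ℕ) + 1) / 2, by omega⟩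
    have hcoef : Complex.exp (Complex.I * (((((m : ℕ) / 2 : ℕ) + 1 : ℕ) : ℂ) * (2 * (θt : ℂ))))
        = Complex.exp (Complex.I * ((((m : ℕ) + 1 : ℕ) : ℂ) * (θt : ℂ))) := by
      have h2 : (((m : ℕ) / 2 + 1) : ℕ) * 2 = (m : ℕ) + 1 := by omega
      rw [show Complex.I * (((((m : ℕ) / 2 : ℕ) + 1 : ℕ) : ℂ) * (2 * (θt : ℂ)))
          = Complex.I * (((((m : ℕ) / 2 + 1) * 2 : ℕ) : ℂ) * (θt : ℂ)) by push_cast; ring, h2]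
    rw [hcoef, hsign]
    simp only [Matrix.mulVec_add, Matrix.mulVec_smul, Matrix.smul_mulVec,
      Matrix.add_mulVec, smul_add, smul_smul]
    module
end

section
/- (Optimal damping parameter and asymptotic smoothing factor.) For every ω ∈ (0,1]: max{ |1−ω|, √((1−ω)² + ω²) } ≥ 1/√2, with equality if and only if ω = 1/2. In particular, the minimum over ω ∈ (0,1] of max{ |1−ω|, √((1−ω)² + ω²) } equals 1/√2 and is attained uniquely at ω = 1/2, at which |1−ω| = 1/2 and √((1−ω)² + ω²) = 1/√2. -/
lemma aux_sqrt_half : (1 : ℝ) / Real.sqrt 2 = Real.sqrt (1 / 2) := by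
  rw [one_div, ← Real.sqrt_inv, one_div]

lemma aux_max (ω : ℝ) :
    max |1 - ω| (Real.sqrt ((1 - ω) ^ 2 + ω ^ 2)) = Real.sqrt ((1 - ω) ^ 2 + ω ^ 2) := by
  apply max_eq_right
  rw [← Real.sqrt_sq_eq_abs]
  exact Real.sqrt_le_sqrt (by nlinarith [sq_nonneg ω])

/-- Optimal damping parameter and asymptotic smoothing factor: for every `ω ∈ (0,1]`,
`max{|1-ω|, √((1-ω)² + ω²)} ≥ 1/√2` with equality iff `ω = 1/2`; the minimum over
`(0,1]` equals `1/√2`, attained uniquely at `ω = 1/2`, where `|1-ω| = 1/2` and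
`√((1-ω)² + ω²) = 1/√2`. -/
theorem stmt_18 :
    (∀ ω ∈ Set.Ioc (0 : ℝ) 1,
      1 / Real.sqrt 2 ≤ max |1 - ω| (Real.sqrt ((1 - ω) ^ 2 + ω ^ 2))
      ∧ (max |1 - ω| (Real.sqrt ((1 - ω) ^ 2 + ω ^ 2)) = 1 / Real.sqrt 2 ↔ ω = 1 / 2))
    ∧ IsLeast
        ((fun ω : ℝ => max |1 - ω| (Real.sqrt ((1 - ω) ^ 2 + ω ^ 2))) '' Set.Ioc (0 : ℝ) 1)
        (1 / Real.sqrt 2)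
    ∧ |1 - (1 / 2 : ℝ)| = 1 / 2
    ∧ Real.sqrt ((1 - (1 / 2 : ℝ)) ^ 2 + (1 / 2 : ℝ) ^ 2) = 1 / Real.sqrt 2 := by
  have hval : Real.sqrt ((1 - (1 / 2 : ℝ)) ^ 2 + (1 / 2 : ℝ) ^ 2) = 1 / Real.sqrt 2 := by
    rw [aux_sqrt_half]; norm_num
  have key : ∀ ω ∈ Set.Ioc (0 : ℝ) 1,
      1 / Real.sqrt 2 ≤ max |1 - ω| (Real.sqrt ((1 - ω) ^ 2 + ω ^ 2))
      ∧ (max |1 - ω| (Real.sqrt ((1 - ω) ^ 2 + ω ^ 2)) = 1 / Real.sqrt 2 ↔ ω = 1 / 2) := by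
    intro ω _
    rw [aux_max, aux_sqrt_half]
    constructor
    · exact Real.sqrt_le_sqrt (by nlinarith [sq_nonneg (2 * ω - 1)])
    · constructor
      · intro h
        have := (Real.sqrt_inj (by positivity) (by norm_num)).1 h
        nlinarith [sq_nonneg (2 * ω - 1)]
      · intro h; subst h; norm_num
  refine ⟨key, ⟨⟨1 / 2, by norm_num, by simp only [aux_max]; exact_mod_cast hval⟩, ?_⟩, by norm_num, hval⟩
  rintro x ⟨ω, hω, rfl⟩
  exact (key ω hω).1
end
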